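/- Fix an integer n ≥ 3 and set a = (16n/((2n−1)·16ⁿ))^{1/(n+1−2n²)}. Let S : ℝ² → ℝ be defined on {x > 0, y > 0} by S(x,y) = (2n−1)( 4(n−1)(n−2)/x + 8(n−1)/y − (n−2)x/y² − x^{−(2n−1)(n−2)} y^{−(4n−2)} ). Then the kernel of the Hessian of S at the point (a, a/2) is one-dimensional, spanned by the vector (1, −(n−2)/4); that is, for v ∈ ℝ², the second Fréchet derivative of S at (a, a/2) satisfies D²S(a,a/2)(v,w) = 0 for all w ∈ ℝ² if and only if v is a scalar multiple of (1, −(n−2)/4). -/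

import Mathlib

/-!
On the open positive quadrant `S` is a sum of four monomials `c x^s y^t` with real exponents, and
the Hessian of a monomial is `c x^s y^t` times the quadratic form with matrix
`[[s(s-1)/x², st/(xy)], [st/(xy), t(t-1)/y²]]`. At `(a, a/2)` the Einstein equation
`a^{-(2n-1)(n-2)} (a/2)^{-(4n-2)} = 4n/((2n-1)a)` eliminates the transcendental monomial, and the
Hessian collapses to the rank-one form `-4(2n-1)(n-1)(2n+1)/a³ · ℓ(v) ℓ(w)` with
`ℓ(v) = (n-2)v₁ + 4v₂`, whose kernel is the line `ℓ = 0`.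
-/

open ContinuousLinearMap Filter Topology

theorem fderiv_fderiv_apply_of_partials {f g₁ g₂ : ℝ × ℝ → ℝ} {p : ℝ × ℝ} {h₁₁ h₁₂ h₂₁ h₂₂ : ℝ}
    (hf : ∀ᶠ q in 𝓝 p, HasFDerivAt f (g₁ q • fst ℝ ℝ ℝ + g₂ q • snd ℝ ℝ ℝ) q)
    (hg₁ : HasFDerivAt g₁ (h₁₁ • fst ℝ ℝ ℝ + h₁₂ • snd ℝ ℝ ℝ) p)
    (hg₂ : HasFDerivAt g₂ (h₂₁ • fst ℝ ℝ ℝ + h₂₂ • snd ℝ ℝ ℝ) p) (v w : ℝ × ℝ) :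
    fderiv ℝ (fderiv ℝ f) p v w
      = (h₁₁ * v.1 + h₁₂ * v.2) * w.1 + (h₂₁ * v.1 + h₂₂ * v.2) * w.2 := by
  have hgrad : fderiv ℝ f =ᶠ[𝓝 p] fun q => g₁ q • fst ℝ ℝ ℝ + g₂ q • snd ℝ ℝ ℝ :=
    hf.mono fun q hq => hq.fderiv
  have hhess : HasFDerivAt (fun q => g₁ q • fst ℝ ℝ ℝ + g₂ q • snd ℝ ℝ ℝ)
      ((h₁₁ • fst ℝ ℝ ℝ + h₁₂ • snd ℝ ℝ ℝ).smulRight (fst ℝ ℝ ℝ)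
        + (h₂₁ • fst ℝ ℝ ℝ + h₂₂ • snd ℝ ℝ ℝ).smulRight (snd ℝ ℝ ℝ)) p :=
    (hg₁.smul_const (fst ℝ ℝ ℝ)).add (hg₂.smul_const (snd ℝ ℝ ℝ))
  rw [hgrad.fderiv_eq, hhess.fderiv]
  simp

noncomputable def rpowPoly {ι : Type*} (u : Finset ι) (c s t : ι → ℝ) (q : ℝ × ℝ) : ℝ :=
  ∑ i ∈ u, c i * q.1 ^ s i * q.2 ^ t i

theorem quadrant_mem_nhds {p : ℝ × ℝ} (hp₁ : 0 < p.1) (hp₂ : 0 < p.2) :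
    {q : ℝ × ℝ | 0 < q.1 ∧ 0 < q.2} ∈ 𝓝 p :=
  ((isOpen_lt continuous_const continuous_fst).inter
    (isOpen_lt continuous_const continuous_snd)).mem_nhds ⟨hp₁, hp₂⟩

section RpowPoly

variable {ι : Type*} (u : Finset ι) (c s t : ι → ℝ) {p : ℝ × ℝ}

theorem hasFDerivAt_rpowPoly (hp₁ : 0 < p.1) (hp₂ : 0 < p.2) :
    HasFDerivAt (rpowPoly u c s t)
      (rpowPoly u (c * s) (s - 1) t p • fst ℝ ℝ ℝ
        + rpowPoly u (c * t) s (t - 1) p • snd ℝ ℝ ℝ) p := by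
  have hterm : ∀ i ∈ u, HasFDerivAt (fun q : ℝ × ℝ => c i * q.1 ^ s i * q.2 ^ t i)
      ((c i * p.1 ^ s i) • (t i * p.2 ^ (t i - 1)) • snd ℝ ℝ ℝ
        + p.2 ^ t i • c i • (s i * p.1 ^ (s i - 1)) • fst ℝ ℝ ℝ) p := fun i _ =>
    (((Real.hasDerivAt_rpow_const (Or.inl hp₁.ne')).comp_hasFDerivAt p
      hasFDerivAt_fst).const_mul (c i)).mul
      ((Real.hasDerivAt_rpow_const (Or.inl hp₂.ne')).comp_hasFDerivAt p hasFDerivAt_snd)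
  refine (HasFDerivAt.fun_sum hterm).congr_fderiv (ContinuousLinearMap.ext fun w => ?_)
  simp only [rpowPoly, _root_.sum_apply, _root_.add_apply,
    _root_.smul_apply, coe_fst', coe_snd', smul_eq_mul, Pi.mul_apply,
    Pi.sub_apply, Pi.one_apply, Finset.sum_mul, ← Finset.sum_add_distrib]
  exact Finset.sum_congr rfl fun i _ => by ring

theorem fderiv_fderiv_rpowPoly_apply (hp₁ : 0 < p.1) (hp₂ : 0 < p.2) (v w : ℝ × ℝ) :
    fderiv ℝ (fderiv ℝ (rpowPoly u c s t)) p v w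
      = ∑ i ∈ u, c i * (p.1 ^ s i * p.2 ^ t i) *
          (s i * (s i - 1) * v.1 * w.1 / p.1 ^ 2 + s i * t i * (v.1 * w.2 + v.2 * w.1) / (p.1 * p.2)
            + t i * (t i - 1) * v.2 * w.2 / p.2 ^ 2) := by
  rw [fderiv_fderiv_apply_of_partials
    (Filter.mem_of_superset (quadrant_mem_nhds hp₁ hp₂) fun q hq =>
      hasFDerivAt_rpowPoly u c s t hq.1 hq.2)
    (hasFDerivAt_rpowPoly u _ _ _ hp₁ hp₂) (hasFDerivAt_rpowPoly u _ _ _ hp₁ hp₂) v w]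
  simp only [rpowPoly, Pi.mul_apply, Pi.sub_apply, Pi.one_apply, Finset.sum_mul,
    ← Finset.sum_add_distrib, Real.rpow_sub hp₁, Real.rpow_sub hp₂, Real.rpow_one]
  refine Finset.sum_congr rfl fun i _ => ?_
  field_simp
  ring

end RpowPoly

theorem forall_mul_mul_eq_zero_iff_exists_smul {K α β : ℝ} (hK : K ≠ 0) (hβ : β ≠ 0)
    (v : ℝ × ℝ) :
    (∀ w : ℝ × ℝ, K * (α * v.1 + β * v.2) * (α * w.1 + β * w.2) = 0)
      ↔ ∃ c : ℝ, v = c • ((1, -(α / β)) : ℝ × ℝ) := by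
  constructor
  · intro h
    have hv : α * v.1 + β * v.2 = 0 := by
      simpa [hK, hβ] using h (0, 1)
    refine ⟨v.1, Prod.ext (by simp) ?_⟩
    simp only [Prod.smul_mk, smul_eq_mul]
    field_simp
    linarith
  · rintro ⟨c, rfl⟩ w
    simp only [Prod.smul_mk, smul_eq_mul]
    field_simp
    ring

noncomputable def scalarCurvature (N : ℝ) (p : ℝ × ℝ) : ℝ :=
  (2 * N - 1) * (4 * (N - 1) * (N - 2) / p.1 + 8 * (N - 1) / p.2 - (N - 2) * p.1 / p.2 ^ 2
    - p.1 ^ (-((2 * N - 1) * (N - 2))) * p.2 ^ (-(4 * N - 2)))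

theorem scalarCurvature_eventuallyEq_rpowPoly (N : ℝ) {p : ℝ × ℝ} (hp₁ : 0 < p.1)
    (hp₂ : 0 < p.2) :
    scalarCurvature N =ᶠ[𝓝 p] rpowPoly Finset.univ
      ![(2 * N - 1) * (4 * (N - 1) * (N - 2)), (2 * N - 1) * (8 * (N - 1)),
        -((2 * N - 1) * (N - 2)), -(2 * N - 1)]
      ![-1, 0, 1, -((2 * N - 1) * (N - 2))] ![0, -1, -2, -(4 * N - 2)] := by
  filter_upwards [quadrant_mem_nhds hp₁ hp₂] with q ⟨hq₁, hq₂⟩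
  simp only [scalarCurvature, rpowPoly, Fin.sum_univ_four, Matrix.cons_val, Real.rpow_neg hq₁.le,
    Real.rpow_neg hq₂.le, Real.rpow_one, Real.rpow_zero, Real.rpow_ofNat]
  ring

theorem fderiv_fderiv_scalarCurvature_apply {N a : ℝ} (hN : 2 * N - 1 ≠ 0) (ha : 0 < a)
    (hP : a ^ (-((2 * N - 1) * (N - 2))) * (a / 2) ^ (-(4 * N - 2)) = 4 * N / ((2 * N - 1) * a))
    (v w : ℝ × ℝ) :
    fderiv ℝ (fderiv ℝ (scalarCurvature N)) (a, a / 2) v w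
      = -(4 * (2 * N - 1) * (N - 1) * (2 * N + 1)) / a ^ 3
          * ((N - 2) * v.1 + 4 * v.2) * ((N - 2) * w.1 + 4 * w.2) := by
  have ha₂ : (0 : ℝ) < (a, a / 2).2 := half_pos ha
  rw [(scalarCurvature_eventuallyEq_rpowPoly N ha ha₂).fderiv.fderiv_eq,
    fderiv_fderiv_rpowPoly_apply _ _ _ _ ha ha₂]
  simp only [Fin.sum_univ_four, Matrix.cons_val_zero, Matrix.cons_val_one, Matrix.cons_val_two,
    Matrix.cons_val_three, Matrix.head_cons, Matrix.tail_cons, hP]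
  simp only [Real.rpow_neg ha.le, Real.rpow_neg ha₂.le, Real.rpow_one, Real.rpow_zero,
    Real.rpow_ofNat]
  field_simp
  ring

noncomputable def einsteinScale (n : ℕ) : ℝ :=
  (16 * (n : ℝ) / ((2 * (n : ℝ) - 1) * 16 ^ n)) ^ (1 / ((n : ℝ) + 1 - 2 * (n : ℝ) ^ 2))

section EinsteinScale

variable {n : ℕ}

theorem einsteinScale_base_pos (hn : 1 ≤ n) :
    0 < 16 * (n : ℝ) / ((2 * (n : ℝ) - 1) * 16 ^ n) := by
  have hN : (1 : ℝ) ≤ n := by exact_mod_cast hn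
  exact div_pos (by linarith) (mul_pos (by linarith) (by positivity))

theorem einsteinScale_pos (hn : 1 ≤ n) : 0 < einsteinScale n :=
  Real.rpow_pos_of_pos (einsteinScale_base_pos hn) _

theorem einsteinScale_rpow (hn : 2 ≤ n) :
    einsteinScale n ^ ((n : ℝ) + 1 - 2 * (n : ℝ) ^ 2)
      = 16 * (n : ℝ) / ((2 * (n : ℝ) - 1) * 16 ^ n) := by
  have hN : (2 : ℝ) ≤ n := by exact_mod_cast hn
  rw [einsteinScale, ← Real.rpow_mul (einsteinScale_base_pos (by omega)).le,
    one_div_mul_cancel (by nlinarith), Real.rpow_one]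

theorem two_rpow_four_mul_sub_two (n : ℕ) : (2 : ℝ) ^ (4 * (n : ℝ) - 2) = 16 ^ n / 4 := by
  rw [Real.rpow_sub two_pos, show 4 * (n : ℝ) = ((4 * n : ℕ) : ℝ) by push_cast; ring,
    Real.rpow_natCast, pow_mul]
  norm_num

/-- The Einstein equation at `(a, a / 2)`. -/
theorem einsteinScale_rpow_mul_half_rpow (hn : 2 ≤ n) :
    einsteinScale n ^ (-((2 * (n : ℝ) - 1) * ((n : ℝ) - 2)))
        * (einsteinScale n / 2) ^ (-(4 * (n : ℝ) - 2))
      = 4 * n / ((2 * n - 1) * einsteinScale n) := by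
  have ha := einsteinScale_pos (by omega : 1 ≤ n)
  rw [Real.div_rpow ha.le zero_le_two, div_eq_mul_inv, ← mul_assoc, ← Real.rpow_add ha,
    show -((2 * (n : ℝ) - 1) * ((n : ℝ) - 2)) + -(4 * n - 2) = ((n : ℝ) + 1 - 2 * n ^ 2) - 1 by
      ring,
    Real.rpow_sub ha, Real.rpow_one, einsteinScale_rpow hn, Real.rpow_neg zero_le_two,
    two_rpow_four_mul_sub_two, inv_inv]
  field_simp
  ring

end EinsteinScale

/-- The kernel of the Hessian at `(a, a/2)` of the scalar curvature
`S(x,y) = (2n−1)(4(n−1)(n−2)/x + 8(n−1)/y − (n−2)x/y² − x^{−(2n−1)(n−2)}y^{−(4n−2)})`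
of unit-volume `SU(2n−1)`-invariant metrics on `SU(2n)/Sp(n)` is one-dimensional,
spanned by `(1, −(n−2)/4)`. -/
theorem hessian_kernel_SU2n_Spn (n : ℕ) (hn : 3 ≤ n) (a : ℝ)
    (ha : a = (16 * (n : ℝ) / ((2 * (n : ℝ) - 1) * 16 ^ n))
      ^ (1 / ((n : ℝ) + 1 - 2 * (n : ℝ) ^ 2)))
    (S : ℝ × ℝ → ℝ)
    (hS : ∀ p : ℝ × ℝ, S p = (2 * (n : ℝ) - 1) *
      (4 * ((n : ℝ) - 1) * ((n : ℝ) - 2) / p.1 + 8 * ((n : ℝ) - 1) / p.2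
        - ((n : ℝ) - 2) * p.1 / p.2 ^ 2
        - p.1 ^ (-((2 * (n : ℝ) - 1) * ((n : ℝ) - 2))) * p.2 ^ (-(4 * (n : ℝ) - 2)))) :
    ∀ v : ℝ × ℝ,
      (∀ w : ℝ × ℝ, fderiv ℝ (fderiv ℝ S) (a, a / 2) v w = 0) ↔
        ∃ c : ℝ, v = c • ((1, -(((n : ℝ) - 2) / 4)) : ℝ × ℝ) := by
  obtain rfl : S = scalarCurvature n := funext hS
  obtain rfl : a = einsteinScale n := ha
  have hN : (3 : ℝ) ≤ n := by exact_mod_cast hn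
  have ha₀ := einsteinScale_pos (by omega : 1 ≤ n)
  have hK : -(4 * (2 * (n : ℝ) - 1) * (n - 1) * (2 * n + 1)) / einsteinScale n ^ 3 ≠ 0 := by
    have : (0 : ℝ) < 4 * (2 * n - 1) * (n - 1) * (2 * n + 1) := by
      apply_rules [mul_pos] <;> linarith
    exact div_ne_zero (neg_ne_zero.mpr this.ne') (by positivity)
  intro v
  simp only [fderiv_fderiv_scalarCurvature_apply (by linarith) ha₀
    (einsteinScale_rpow_mul_half_rpow (by omega))]
  exact forall_mul_mul_eq_zero_iff_exists_smul hK four_ne_zero v
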